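/- arXiv:2309.00967 — 2 statements merged into one kernel-verified Lean document; each statement's English description precedes it below -/
import Mathlib

section
/- Let s₁, s₂, t₁, t₂ ∈ 𝒪 with s₁ ≠ s₂. Then there exists a unique point (x,y) ∈ 𝒪×𝒪 with y = s₁*x + t₁ and y = s₂*x + t₂; moreover x = n(s₁−s₂)⁻¹·((t₂−t₁)*(s₁−s₂)). In other words, two lines of the Okubic affine plane with distinct slopes meet in exactly one point. -/
/-! The real Okubo algebra is a composition algebra satisfying the flexible identities
`(x*y)*x = x*(y*x) = n(x)·y`. For traceless `3 × 3` matrices these follow from the polarized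
Cayley–Hamilton identity, because `μ` is a root of `μ² - μ + 1/3`. Since `n` is positive definite
on Hermitian matrices, left multiplication by `s = s₁ - s₂ ≠ 0` is therefore invertible with inverse
`c ↦ n(s)⁻¹ · (c*s)`; a common point `(x, y)` of the two lines is exactly a solution of
`s*x = t₂ - t₁`. -/

open Matrix Complex

noncomputable section

/-- `3 × 3` complex matrices. -/
abbrev M3 : Type := Matrix (Fin 3) (Fin 3) ℂ

/-- The real Okubo algebra: `3 × 3` traceless Hermitian complex matrices. -/
def Okubo : Set M3 := {x | x.IsHermitian ∧ x.trace = 0}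

/-- The constant `μ = (3 + i√3)/6`. -/
def okMu : ℂ := (3 + (Real.sqrt 3 : ℂ) * Complex.I) / 6

/-- The Okubo product `x*y = μ·(xy) + μ̄·(yx) − (1/3)Tr(xy)·Id`. -/
def omul (x y : M3) : M3 :=
  okMu • (x * y) + (starRingEnd ℂ) okMu • (y * x) - ((1 / 3 : ℂ) * (x * y).trace) • (1 : M3)

/-- The Okubic norm `n(x) = (1/6)Tr(x²)` (real-valued on Hermitian matrices). -/
def onorm (x : M3) : ℝ := (1 / 6) * ((x * x).trace).re

/-- The polar form `⟨x,y⟩ = n(x+y) − n(x) − n(y)` of the Okubic norm. -/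
def opolar (x y : M3) : ℝ := onorm (x + y) - onorm x - onorm y

open scoped ComplexOrder

lemma conj_okMu : (starRingEnd ℂ) okMu = 1 - okMu := by
  simp only [okMu, map_div₀, map_add, map_mul, conj_I, conj_ofReal, map_ofNat]
  ring

lemma okMu_sq : okMu ^ 2 = okMu - 1 / 3 := by
  have h3 : (Real.sqrt 3 : ℂ) ^ 2 = 3 := by norm_cast; simp
  rw [okMu]
  linear_combination (I ^ 2 / 36) * h3 + (1 / 12 : ℂ) * I_sq

lemma trace_omul (x y : M3) : (omul x y).trace = 0 := by
  simp only [omul, trace_sub, trace_add, trace_smul, trace_one, trace_mul_comm y x, conj_okMu,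
    smul_eq_mul, Fintype.card_fin]
  push_cast
  ring

lemma conj_trace_mul_of_isHermitian {x y : M3} (hx : x.IsHermitian) (hy : y.IsHermitian) :
    (starRingEnd ℂ) (x * y).trace = (x * y).trace := by
  rw [← star_def, ← trace_conjTranspose, conjTranspose_mul, hx.eq, hy.eq, trace_mul_comm]

lemma isHermitian_omul {x y : M3} (hx : x.IsHermitian) (hy : y.IsHermitian) :
    (omul x y).IsHermitian := by
  simp only [IsHermitian, omul, conjTranspose_sub, conjTranspose_add, conjTranspose_smul,
    conjTranspose_mul, conjTranspose_one, hx.eq, hy.eq, star_def, map_mul, conj_conj,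
    conj_trace_mul_of_isHermitian hx hy, map_div₀, map_one, map_ofNat]
  abel

lemma transpose_omul (x y : M3) : (omul x y)ᵀ = omul yᵀ xᵀ := by
  simp only [omul, transpose_sub, transpose_add, transpose_smul, transpose_one, ← transpose_mul,
    trace_transpose]

lemma omul_sub_left (a b x : M3) : omul (a - b) x = omul a x - omul b x := by
  simp only [omul, sub_mul, mul_sub, trace_sub, smul_sub, sub_smul]
  abel

lemma omul_smul_right (r : ℝ) (x y : M3) : omul x (r • y) = r • omul x y := by
  simp only [omul, mul_smul_comm, smul_mul_assoc, trace_smul, smul_sub, smul_add, smul_comm r,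
    smul_assoc]

lemma polarized_cayleyHamilton_of_trace_eq_zero {x y : M3} (hx : x.trace = 0) (hy : y.trace = 0) :
    x * y * x + x * x * y + y * x * x =
      (x * y).trace • x + ((1 / 2 : ℂ) * (x * x).trace) • y + (x * x * y).trace • (1 : M3) := by
  have hx₂ : x 2 2 = -x 0 0 - x 1 1 := by
    simp only [trace, diag, Fin.sum_univ_three] at hx; linear_combination hx
  have hy₂ : y 2 2 = -y 0 0 - y 1 1 := by
    simp only [trace, diag, Fin.sum_univ_three] at hy; linear_combination hy
  ext i j
  fin_cases i <;> fin_cases j <;>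
    simp [mul_apply, trace, Fin.sum_univ_three, one_apply, hx₂, hy₂] <;> ring

lemma omul_omul_self_of_trace_eq_zero {x y : M3} (hx : x.trace = 0) (hy : y.trace = 0) :
    omul (omul x y) x = ((1 / 6 : ℂ) * (x * x).trace) • y := by
  have hxyx := polarized_cayleyHamilton_of_trace_eq_zero hx hy
  rw [← eq_sub_iff_add_eq, ← eq_sub_iff_add_eq] at hxyx
  have htr₁ : (x * y * x).trace = (x * x * y).trace := trace_mul_cycle x y x
  have htr₂ : (y * x * x).trace = (x * x * y).trace := (trace_mul_cycle y x x).trans htr₁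
  simp only [omul, conj_okMu, add_mul, mul_add, sub_mul, mul_sub, smul_mul_assoc, mul_smul_comm,
    one_mul, mul_one, trace_add, trace_sub, trace_smul, smul_eq_mul, ← mul_assoc]
  rw [htr₁, htr₂, hx, hxyx]
  match_scalars
  · linear_combination (2 * (x * y).trace) * okMu_sq
  · linear_combination (x * x).trace * okMu_sq
  · linear_combination (2 * (x * x * y).trace) * okMu_sq
  · linear_combination (-3 : ℂ) * okMu_sq
  · linear_combination (-3 : ℂ) * okMu_sq

-- Transposition is an anti-automorphism of `omul`, which mirrors the previous identity.
lemma omul_self_omul_of_trace_eq_zero {x y : M3} (hx : x.trace = 0) (hy : y.trace = 0) :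
    omul x (omul y x) = ((1 / 6 : ℂ) * (x * x).trace) • y := by
  rw [← transpose_transpose (omul x (omul y x)), transpose_omul x, transpose_omul y x,
    omul_omul_self_of_trace_eq_zero (by rwa [trace_transpose]) (by rwa [trace_transpose]),
    transpose_smul, transpose_transpose, ← transpose_mul, trace_transpose]

lemma ofReal_onorm {x : M3} (hx : x.IsHermitian) :
    (onorm x : ℂ) = (1 / 6 : ℂ) * (x * x).trace := by
  have h := (posSemidef_conjTranspose_mul_self x).trace_nonneg
  rw [hx.eq, nonneg_iff] at h
  apply Complex.ext <;> simp [onorm, ← h.2]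

lemma onorm_pos {x : M3} (hx : x.IsHermitian) (hx₀ : x ≠ 0) : 0 < onorm x := by
  have h : 0 < (xᴴ * x).trace :=
    (posSemidef_conjTranspose_mul_self x).trace_nonneg.lt_of_ne'
      (trace_conjTranspose_mul_self_eq_zero_iff.not.mpr hx₀)
  rw [hx.eq, pos_iff] at h
  unfold onorm
  linarith [h.1]

lemma okubo_add_mem {x y : M3} (hx : x ∈ Okubo) (hy : y ∈ Okubo) : x + y ∈ Okubo :=
  ⟨hx.1.add hy.1, by rw [trace_add, hx.2, hy.2, add_zero]⟩

lemma okubo_sub_mem {x y : M3} (hx : x ∈ Okubo) (hy : y ∈ Okubo) : x - y ∈ Okubo :=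
  ⟨hx.1.sub hy.1, by rw [trace_sub, hx.2, hy.2, sub_zero]⟩

lemma okubo_smul_mem (r : ℝ) {x : M3} (hx : x ∈ Okubo) : r • x ∈ Okubo :=
  ⟨hx.1.smul (IsSelfAdjoint.all r), by rw [trace_smul, hx.2, smul_zero]⟩

lemma omul_mem_okubo {x y : M3} (hx : x ∈ Okubo) (hy : y ∈ Okubo) : omul x y ∈ Okubo :=
  ⟨isHermitian_omul hx.1 hy.1, trace_omul x y⟩

lemma omul_omul_self {x y : M3} (hx : x ∈ Okubo) (hy : y ∈ Okubo) :
    omul (omul x y) x = onorm x • y := by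
  rw [← Complex.coe_smul, ofReal_onorm hx.1, omul_omul_self_of_trace_eq_zero hx.2 hy.2]

lemma omul_self_omul {x y : M3} (hx : x ∈ Okubo) (hy : y ∈ Okubo) :
    omul x (omul y x) = onorm x • y := by
  rw [← Complex.coe_smul, ofReal_onorm hx.1, omul_self_omul_of_trace_eq_zero hx.2 hy.2]

lemma omul_eq_iff_eq_inv_onorm_smul {s x c : M3} (hs : s ∈ Okubo) (hs₀ : s ≠ 0) (hx : x ∈ Okubo)
    (hc : c ∈ Okubo) : omul s x = c ↔ x = (onorm s)⁻¹ • omul c s := by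
  have hn : onorm s ≠ 0 := (onorm_pos hs.1 hs₀).ne'
  constructor
  · rintro rfl
    rw [omul_omul_self hs hx, inv_smul_smul₀ hn]
  · rintro rfl
    rw [omul_smul_right, omul_self_omul hs hc, inv_smul_smul₀ hn]

lemma add_eq_add_iff_omul_sub_eq (s₁ t₁ s₂ t₂ x : M3) :
    omul s₁ x + t₁ = omul s₂ x + t₂ ↔ omul (s₁ - s₂) x = t₂ - t₁ := by
  rw [omul_sub_left, sub_eq_sub_iff_add_eq_add, add_comm t₂]

/-- Two lines `[s₁,t₁]`, `[s₂,t₂]` of the Okubic affine plane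
with distinct slopes `s₁ ≠ s₂` meet in exactly one point, whose first coordinate
is `x = n(s₁−s₂)⁻¹ • ((t₂−t₁)*(s₁−s₂))`. -/
theorem okubo_paper_stmt12 (s₁ t₁ s₂ t₂ : M3)
    (hs₁ : s₁ ∈ Okubo) (ht₁ : t₁ ∈ Okubo) (hs₂ : s₂ ∈ Okubo) (ht₂ : t₂ ∈ Okubo)
    (hne : s₁ ≠ s₂) :
    (∃! p : M3 × M3, p.1 ∈ Okubo ∧ p.2 ∈ Okubo ∧
      p.2 = omul s₁ p.1 + t₁ ∧ p.2 = omul s₂ p.1 + t₂) ∧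
    (∀ x ∈ Okubo, ∀ y ∈ Okubo,
      y = omul s₁ x + t₁ → y = omul s₂ x + t₂ →
        x = (onorm (s₁ - s₂))⁻¹ • omul (t₂ - t₁) (s₁ - s₂)) := by
  set x₀ := (onorm (s₁ - s₂))⁻¹ • omul (t₂ - t₁) (s₁ - s₂)
  have hx₀ : x₀ ∈ Okubo :=
    okubo_smul_mem _ (omul_mem_okubo (okubo_sub_mem ht₂ ht₁) (okubo_sub_mem hs₁ hs₂))
  have meet : ∀ x ∈ Okubo, omul s₁ x + t₁ = omul s₂ x + t₂ ↔ x = x₀ := fun x hx => by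
    rw [add_eq_add_iff_omul_sub_eq, omul_eq_iff_eq_inv_onorm_smul (okubo_sub_mem hs₁ hs₂)
      (sub_ne_zero.mpr hne) hx (okubo_sub_mem ht₂ ht₁)]
  refine ⟨⟨(x₀, omul s₁ x₀ + t₁),
    ⟨hx₀, okubo_add_mem (omul_mem_okubo hs₁ hx₀) ht₁, rfl, (meet x₀ hx₀).mpr rfl⟩, ?_⟩, ?_⟩
  · rintro ⟨x, y⟩ ⟨hx, -, h₁, h₂⟩
    obtain rfl := (meet x hx).mp (h₁.symm.trans h₂)
    exact Prod.ext rfl h₁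
  · rintro x hx y - rfl h
    exact (meet x hx).mp h

end
end

section
/- The reflection ρ(x,y) = (y,x) of the Okubic affine plane is not a collineation: there exist s, t ∈ 𝒪 such that the image set ρ([s,t]) = {(s*x + t, x) : x ∈ 𝒪} is neither a line of the form {(x', s'*x' + t') : x' ∈ 𝒪} for any s', t' ∈ 𝒪 nor a vertical line {c}×𝒪 for any c ∈ 𝒪. -/
/-! Take `s = diag(1,-1,0)` and `t = 0`. If `ρ([s,0])` were a line `[s',t']`, then `t' = 0`
and `s' * (s * x) = x` on `𝒪`. At `x = s`, where `s * s = diag(1/3,1/3,-2/3)`, this forces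
`s'₀₀ = 3`; at `x = E₀₂ + E₂₀` it then forces `3μ² + s'₂₂/3 = 1`, impossible since `μ²` is not
real while the diagonal entry `s'₂₂` of a Hermitian matrix is. If `ρ([s,0])` were a vertical
line, then `s * x = 0` on `𝒪`, which fails at `x = s`. -/

open Matrix Complex

noncomputable section

/-- The line `[s,t]` of the Okubic affine plane, as a set of points. -/
def lineSet (s t : M3) : Set (M3 × M3) := {p | ∃ x ∈ Okubo, p = (x, omul s x + t)}

/-- The vertical line `[c]` of the Okubic affine plane, as a set of points. -/
def vertSet (c : M3) : Set (M3 × M3) := {p | p.1 = c ∧ p.2 ∈ Okubo}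

/-- The image of the line `[s,t]` under the reflection `ρ(x,y) = (y,x)`. -/
def rhoImage (s t : M3) : Set (M3 × M3) := {p | ∃ x ∈ Okubo, p = (omul s x + t, x)}

def sDiag : M3 := !![1, 0, 0; 0, -1, 0; 0, 0, 0]

def xOffDiag : M3 := !![0, 0, 1; 0, 0, 0; 1, 0, 0]

lemma okMu_re : okMu.re = 1 / 2 := by
  norm_num [okMu]

lemma okMu_im : okMu.im = √3 / 6 := by
  simp [okMu]

lemma okMu_add_conj : okMu + starRingEnd ℂ okMu = 1 := by
  rw [Complex.add_conj, okMu_re]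
  norm_num

lemma okMu_mul_conj : okMu * starRingEnd ℂ okMu = 1 / 3 := by
  have h : Complex.normSq okMu = 1 / 3 := by
    rw [Complex.normSq_apply, okMu_re, okMu_im]
    ring_nf
    norm_num
  rw [Complex.mul_conj, h]
  norm_num

lemma okMu_sq_im : (okMu ^ 2).im = √3 / 6 := by
  rw [sq, Complex.mul_im, okMu_re, okMu_im]
  ring

lemma zero_mem_okubo : (0 : M3) ∈ Okubo := ⟨isHermitian_zero, trace_zero _ _⟩

lemma sDiag_mem_okubo : sDiag ∈ Okubo := by
  refine ⟨?_, ?_⟩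
  · ext i j
    fin_cases i <;> fin_cases j <;> simp [sDiag]
  · simp [sDiag, Matrix.trace, Fin.sum_univ_three]

lemma xOffDiag_mem_okubo : xOffDiag ∈ Okubo := by
  refine ⟨?_, ?_⟩
  · ext i j
    fin_cases i <;> fin_cases j <;> simp [xOffDiag]
  · simp [xOffDiag, Matrix.trace, Fin.sum_univ_three]

lemma omul_zero_right (a : M3) : omul a 0 = 0 := by simp [omul]

lemma omul_self (x : M3) : omul x x = x * x - ((1 / 3 : ℂ) * (x * x).trace) • 1 := by
  rw [omul, ← add_smul, okMu_add_conj, one_smul]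

lemma omul_sDiag_sDiag : omul sDiag sDiag = !![1 / 3, 0, 0; 0, 1 / 3, 0; 0, 0, -2 / 3] := by
  rw [omul_self]
  ext i j
  fin_cases i <;> fin_cases j <;> norm_num [sDiag, Matrix.trace_fin_three, Matrix.cons_val_two]

lemma omul_sDiag_xOffDiag :
    omul sDiag xOffDiag = !![0, 0, okMu; 0, 0, 0; starRingEnd ℂ okMu, 0, 0] := by
  ext i j
  fin_cases i <;> fin_cases j <;>
    simp [omul, sDiag, xOffDiag, Fin.sum_univ_three, Matrix.trace]

lemma omul_omul_add_of_rhoImage_eq_lineSet {s t s' t' : M3} (h : rhoImage s t = lineSet s' t')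
    {x : M3} (hx : x ∈ Okubo) : omul s' (omul s x + t) + t' = x := by
  obtain ⟨u, -, hu⟩ : (omul s x + t, x) ∈ lineSet s' t' := h ▸ ⟨x, hx, rfl⟩
  rw [Prod.mk.injEq] at hu
  rw [hu.1, ← hu.2]

lemma omul_eq_zero_of_rhoImage_eq_vertSet {s t c : M3} (h : rhoImage s t = vertSet c)
    {x : M3} (hx : x ∈ Okubo) : omul s x = 0 := by
  have h₀ : (t, (0 : M3)) ∈ vertSet c :=
    h ▸ ⟨0, zero_mem_okubo, by rw [omul_zero_right, zero_add]⟩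
  have hx' : (omul s x + t, x) ∈ vertSet c := h ▸ ⟨x, hx, rfl⟩
  simpa using hx'.1.trans h₀.1.symm

lemma omul_omul_sDiag_xOffDiag_ne {s : M3} (hs : s ∈ Okubo)
    (hdiag : omul s (omul sDiag sDiag) = sDiag) : omul s (omul sDiag xOffDiag) ≠ xOffDiag := by
  have htr : s 0 0 + s 1 1 + s 2 2 = 0 := by
    simpa [Matrix.trace, Fin.sum_univ_three] using hs.2
  have h22 : (s 2 2).im = 0 := Complex.conj_eq_iff_im.mp (hs.1.apply 2 2)
  have h11 : okMu * (s 1 1 * 3⁻¹) + starRingEnd ℂ okMu * (3⁻¹ * s 1 1)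
      - 3⁻¹ * (s 0 0 * 3⁻¹ + s 1 1 * 3⁻¹ + s 2 2 * (-2 / 3)) = -1 := by
    rw [omul_sDiag_sDiag] at hdiag
    simpa [omul, sDiag, Matrix.mul_apply, Matrix.vecMul, dotProduct,
      Fin.sum_univ_three, Matrix.trace] using congrFun (congrFun hdiag 1) 1
  have h00 : s 0 0 = 3 := by
    linear_combination -3 * h11 + s 1 1 * okMu_add_conj + 2 / 3 * htr
  intro hoff
  have h02 : okMu * (s 0 0 * okMu) + starRingEnd ℂ okMu * (okMu * s 2 2) = 1 := by
    rw [omul_sDiag_xOffDiag] at hoff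
    simpa [omul, xOffDiag, Matrix.mul_apply, Matrix.vecMul, dotProduct,
      Fin.sum_univ_three, Matrix.trace] using congrFun (congrFun hoff 0) 2
  have hμ : 3 * okMu ^ 2 + s 2 2 / 3 = 1 := by
    linear_combination h02 - okMu ^ 2 * h00 - s 2 2 * okMu_mul_conj
  simpa [okMu_sq_im, h22] using congrArg Complex.im hμ

/-- The reflection `ρ(x,y) = (y,x)` of the Okubic affine plane is
not a collineation: there are `s, t ∈ 𝒪` such that the image `ρ([s,t])` is neither a
line `[s',t']` for any `s', t' ∈ 𝒪` nor a vertical line `[c]` for any `c ∈ 𝒪`. -/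
theorem okubo_paper_stmt16 :
    ∃ s ∈ Okubo, ∃ t ∈ Okubo,
      (∀ s' ∈ Okubo, ∀ t' ∈ Okubo, rhoImage s t ≠ lineSet s' t') ∧
      (∀ c ∈ Okubo, rhoImage s t ≠ vertSet c) := by
  refine ⟨sDiag, sDiag_mem_okubo, 0, zero_mem_okubo, ?_, ?_⟩
  · intro s' hs' t' _ h
    have hinv {x : M3} (hx : x ∈ Okubo) : omul s' (omul sDiag x) + t' = x := by
      simpa using omul_omul_add_of_rhoImage_eq_lineSet h hx
    have ht' : t' = 0 := by simpa [omul_zero_right] using hinv zero_mem_okubo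
    subst ht'
    refine omul_omul_sDiag_xOffDiag_ne hs' ?_ ?_
    · simpa using hinv sDiag_mem_okubo
    · simpa using hinv xOffDiag_mem_okubo
  · intro c _ h
    have h00 := congrFun (congrFun (omul_eq_zero_of_rhoImage_eq_vertSet h sDiag_mem_okubo) 0) 0
    norm_num [omul_sDiag_sDiag] at h00

end
end
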